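/- arXiv:2010.15944 — 8 statements merged into one kernel-verified Lean document; each statement's English description precedes it below -/
import Mathlib

section
/- In any ccpBa, ¬∼a ≤ ∼¬a for all a. -/
theorem ccpBa_neg_snot_le_snot_neg_general {A : Type*} [HeytingAlgebra A] (d : A)
    (a : A) : (a ⇨ d)ᶜ ≤ aᶜ ⇨ d :=
  le_himp_iff.2 <| (disjoint_compl_left.mono_right compl_le_himp).le_bot.trans bot_le

/-- In any ccpBa, `¬∼a ≤ ∼¬a`. -/
theorem ccpBa_neg_snot_le_snot_neg {A : Type*} [HeytingAlgebra A] (d : A) (hd : dᶜᶜ = d)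
    (a : A) : (a ⇨ d)ᶜ ≤ aᶜ ⇨ d :=
  ccpBa_neg_snot_le_snot_neg_general d a
end

section
/- In any ccpBa, ¬∼¬a ≤ ¬a for all a. -/
theorem ccpBa_neg_snot_neg_le_neg_general {A : Type*} [HeytingAlgebra A] (d : A)
    (a : A) : (aᶜ ⇨ d)ᶜ ≤ aᶜ :=
  compl_le_compl <| le_himp_iff.2 <| (inf_compl_self a).le.trans bot_le

/-- In any ccpBa, `¬∼¬a ≤ ¬a`. -/
theorem ccpBa_neg_snot_neg_le_neg {A : Type*} [HeytingAlgebra A] (d : A) (hd : dᶜᶜ = d)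
    (a : A) : (aᶜ ⇨ d)ᶜ ≤ aᶜ :=
  ccpBa_neg_snot_neg_le_neg_general d a
end

section
/- Let A be a Heyting algebra with ¬x := x → 0 and let d ∈ A with ∼a := a → d. Then the condition ¬¬d = d holds if and only if ∼∼(d → a) = 1 for all a ∈ A. -/
/-! Since `dᶜ ⇨ d = dᶜᶜ`, the Peirce term `((d ⇨ a) ⇨ d) ⇨ d` at `a = ⊥` is `dᶜᶜ ⇨ d`, which is `⊤`
exactly when `dᶜᶜ = d`; and the term is monotone in `a`, so its value at `⊥` is the smallest one. -/

section HeytingAlgebra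

variable {α : Type*} [HeytingAlgebra α]

theorem compl_himp_self (a : α) : aᶜ ⇨ a = aᶜᶜ :=
  le_antisymm ((himp_le_himp_left le_compl_compl).trans_eq (himp_compl aᶜ))
    (le_himp_iff.mpr ((compl_inf_self aᶜ).le.trans bot_le))

theorem monotone_peirce (d : α) : Monotone fun a ↦ ((d ⇨ a) ⇨ d) ⇨ d :=
  fun _ _ hab ↦ himp_le_himp_right (himp_le_himp_right (himp_le_himp_left hab))

theorem peirce_bot (d : α) : ((d ⇨ ⊥) ⇨ d) ⇨ d = dᶜᶜ ⇨ d := by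
  rw [himp_bot, compl_himp_self]

end HeytingAlgebra

/-- `¬¬d = d` iff `∼∼(d → a) = 1` for all `a`, where `∼x := x ⇨ d`. -/
theorem ccpBa_iff_peirce {A : Type*} [HeytingAlgebra A] (d : A) :
    dᶜᶜ = d ↔ ∀ a : A, ((d ⇨ a) ⇨ d) ⇨ d = ⊤ :=
  calc dᶜᶜ = d ↔ dᶜᶜ ≤ d := le_compl_compl.ge_iff_eq'.symm
    _ ↔ ((d ⇨ ⊥) ⇨ d) ⇨ d = ⊤ := by rw [peirce_bot, himp_eq_top_iff]
    _ ↔ ∀ a : A, ((d ⇨ a) ⇨ d) ⇨ d = ⊤ :=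
      ⟨fun h a ↦ top_le_iff.mp (h ▸ monotone_peirce d bot_le), fun h ↦ h ⊥⟩
end

section
/- Let H be a Heyting algebra and fix u = (u₁,u₂) with u₁ ≤ u₂ in H. Let A_u := {(a₁,a₂) : a₁ ≤ a₂ ≤ u₂ and a₁ = a₂ ∧ u₁}, with operations (a₁,a₂) ⊔ (b₁,b₂) := (a₁∨b₁, a₂∨b₂) and (a₁,a₂) ⊓ (b₁,b₂) := (a₁∧b₁, a₂∧b₂), implication (a₁,a₂) → (b₁,b₂) := ((a₁→b₁)∧u₁, (a₂→b₂)∧u₂), and ∼(a₁,a₂) := (u₁ ∧ ¬a₁, u₂ ∧ ¬a₁). Then A_u with top (u₁,u₂) and bottom (0,0) forms a ccpBa, i.e., the implication is a relative pseudo-complement, ¬¬∼⊤ = ∼⊤ where ¬x := x → (0,0), and ∼x = x → ∼⊤ for all x ∈ A_u. -/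
/-!
An element of `A_u` is determined by its second coordinate: `A_u` is the image of `[⊥, u₂]` under
`a ↦ (a ⊓ u₁, a)`. This embedding commutes with `⊔`, `⊓` and, because
`(a ⊓ u ⇨ b ⊓ u) ⊓ u = (a ⇨ b) ⊓ u`, with the implication. In each coordinate `(a ⇨ b) ⊓ u` is the
relative pseudo-complement of the interval `[⊥, u]`, which gives residuation. The second coordinate
of `∼⊤` is the pseudo-complement `u₂ ⊓ u₁ᶜ` of `u₁` taken in `[⊥, u₂]`, so it is regular there, and
`∼x = x → ∼⊤` reduces to `a ⇨ u₁ᶜ = (a ⊓ u₁)ᶜ`.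
-/

section HeytingAlgebra

variable {H : Type*} [HeytingAlgebra H]

theorem inf_himp_inf_inf_right (a b u : H) : (a ⊓ u ⇨ b ⊓ u) ⊓ u = (a ⇨ b) ⊓ u := by
  rw [himp_inf_distrib, himp_eq_top_iff.2 inf_le_right, inf_top_eq, inf_comm a, ← himp_himp,
    himp_inf_self]

theorem compl_inf_inf_right (a u : H) : (a ⊓ u)ᶜ ⊓ u = aᶜ ⊓ u := by
  simpa only [bot_inf_eq, himp_bot] using inf_himp_inf_inf_right a ⊥ u

theorem le_himp_inf_iff {a b x u : H} (hx : x ≤ u) : x ≤ (a ⇨ b) ⊓ u ↔ a ⊓ x ≤ b := by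
  rw [le_inf_iff, le_himp_iff, inf_comm, and_iff_left hx]

theorem compl_inf_compl_compl_inf_right (u v : H) : ((u ⊓ vᶜ)ᶜ ⊓ u)ᶜ ⊓ u = u ⊓ vᶜ := by
  rw [compl_inf_inf_right, compl_compl_inf_distrib, compl_compl_compl, inf_right_comm,
    inf_eq_right.2 le_compl_compl]

end HeytingAlgebra

namespace HeytingPair

variable {H : Type*} [HeytingAlgebra H] {u₁ u₂ : H}

def carrier (u₁ u₂ : H) : Set (H × H) := {a | a.1 ≤ a.2 ∧ a.2 ≤ u₂ ∧ a.1 = a.2 ⊓ u₁}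

def imp (u₁ u₂ : H) (a b : H × H) : H × H := ((a.1 ⇨ b.1) ⊓ u₁, (a.2 ⇨ b.2) ⊓ u₂)

def snot (u₁ u₂ : H) (a : H × H) : H × H := (u₁ ⊓ a.1ᶜ, u₂ ⊓ a.1ᶜ)

theorem mk_mem_carrier_iff {a : H} : (a ⊓ u₁, a) ∈ carrier u₁ u₂ ↔ a ≤ u₂ :=
  ⟨fun h ↦ h.2.1, fun h ↦ ⟨inf_le_left, h, rfl⟩⟩

theorem mem_carrier_iff {x : H × H} : x ∈ carrier u₁ u₂ ↔ ∃ a ≤ u₂, x = (a ⊓ u₁, a) := by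
  constructor
  · rintro ⟨-, hx₂, hx₁⟩
    exact ⟨x.2, hx₂, Prod.ext hx₁ rfl⟩
  · rintro ⟨a, ha, rfl⟩
    exact mk_mem_carrier_iff.2 ha

theorem top_mem_carrier (hu : u₁ ≤ u₂) : (u₁, u₂) ∈ carrier u₁ u₂ := by
  simpa only [inf_eq_right.2 hu] using (mk_mem_carrier_iff (u₁ := u₁)).2 (le_refl u₂)

theorem bot_mem_carrier : ((⊥ : H), (⊥ : H)) ∈ carrier u₁ u₂ := by
  simpa only [bot_inf_eq] using (mk_mem_carrier_iff (u₁ := u₁)).2 (bot_le : (⊥ : H) ≤ u₂)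

theorem le_top_of_mem_carrier {x : H × H} (hx : x ∈ carrier u₁ u₂) : x ≤ (u₁, u₂) := by
  obtain ⟨a, ha, rfl⟩ := mem_carrier_iff.1 hx
  exact ⟨inf_le_right, ha⟩

theorem sup_mem_carrier {x y : H × H} (hx : x ∈ carrier u₁ u₂) (hy : y ∈ carrier u₁ u₂) :
    x ⊔ y ∈ carrier u₁ u₂ := by
  obtain ⟨a, ha, rfl⟩ := mem_carrier_iff.1 hx
  obtain ⟨b, hb, rfl⟩ := mem_carrier_iff.1 hy
  rw [Prod.mk_sup_mk, ← inf_sup_right]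
  exact mk_mem_carrier_iff.2 (sup_le ha hb)

theorem inf_mem_carrier {x y : H × H} (hx : x ∈ carrier u₁ u₂) (hy : y ∈ carrier u₁ u₂) :
    x ⊓ y ∈ carrier u₁ u₂ := by
  obtain ⟨a, ha, rfl⟩ := mem_carrier_iff.1 hx
  obtain ⟨b, -, rfl⟩ := mem_carrier_iff.1 hy
  rw [Prod.mk_inf_mk, ← inf_inf_distrib_right]
  exact mk_mem_carrier_iff.2 (inf_le_left.trans ha)

theorem imp_mem_carrier (hu : u₁ ≤ u₂) {x y : H × H} (hx : x ∈ carrier u₁ u₂)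
    (hy : y ∈ carrier u₁ u₂) : imp u₁ u₂ x y ∈ carrier u₁ u₂ := by
  obtain ⟨a, -, rfl⟩ := mem_carrier_iff.1 hx
  obtain ⟨b, -, rfl⟩ := mem_carrier_iff.1 hy
  have h : (a ⊓ u₁ ⇨ b ⊓ u₁) ⊓ u₁ = (a ⇨ b) ⊓ u₂ ⊓ u₁ := by
    rw [inf_himp_inf_inf_right, inf_assoc, inf_eq_right.2 hu]
  rw [imp, h]
  exact mk_mem_carrier_iff.2 inf_le_right

theorem snot_mem_carrier (hu : u₁ ≤ u₂) {x : H × H} : snot u₁ u₂ x ∈ carrier u₁ u₂ := by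
  have h : u₁ ⊓ x.1ᶜ = u₂ ⊓ x.1ᶜ ⊓ u₁ := by rw [inf_right_comm, inf_eq_right.2 hu]
  rw [snot, h]
  exact mk_mem_carrier_iff.2 inf_le_left

theorem inf_le_iff_le_imp {x y z : H × H} (hz : z ∈ carrier u₁ u₂) :
    x ⊓ z ≤ y ↔ z ≤ imp u₁ u₂ x y := by
  rw [imp, Prod.le_def, Prod.le_def, le_himp_inf_iff (le_top_of_mem_carrier hz).1,
    le_himp_inf_iff (le_top_of_mem_carrier hz).2]
  rfl

theorem imp_imp_bot_snot_top :
    imp u₁ u₂ (imp u₁ u₂ (snot u₁ u₂ (u₁, u₂)) (⊥, ⊥)) (⊥, ⊥) = snot u₁ u₂ (u₁, u₂) := by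
  simp only [imp, snot, himp_bot, inf_compl_self, compl_bot, top_inf_eq, compl_inf_self,
    compl_inf_compl_compl_inf_right]

theorem snot_eq_imp_snot_top {x : H × H} (hx : x ∈ carrier u₁ u₂) :
    snot u₁ u₂ x = imp u₁ u₂ x (snot u₁ u₂ (u₁, u₂)) := by
  obtain ⟨a, ha, rfl⟩ := mem_carrier_iff.1 hx
  simp only [imp, snot, inf_compl_self, himp_bot, himp_inf_distrib, himp_eq_top_iff.2 ha,
    top_inf_eq, inf_comm _ u₁, inf_comm _ u₂]
  rw [← himp_bot u₁, himp_himp, himp_bot, inf_comm a]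

end HeytingPair

/-- The construction `A_u` from a Heyting algebra `H` with fixed `u₁ ≤ u₂` forms a ccpBa:
the set is closed under the operations, the implication is a relative pseudo-complement,
`¬¬∼⊤ = ∼⊤` (where `¬x := x → ⊥`), and `∼x = x → ∼⊤`. -/
theorem Au_forms_ccpBa {H : Type*} [HeytingAlgebra H] (u₁ u₂ : H) (hu : u₁ ≤ u₂)
    (Au : Set (H × H)) (hAu : Au = {a : H × H | a.1 ≤ a.2 ∧ a.2 ≤ u₂ ∧ a.1 = a.2 ⊓ u₁})
    (imp : H × H → H × H → H × H)
    (himp : ∀ a b : H × H, imp a b = ((a.1 ⇨ b.1) ⊓ u₁, (a.2 ⇨ b.2) ⊓ u₂))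
    (snot : H × H → H × H)
    (hsnot : ∀ a : H × H, snot a = (u₁ ⊓ a.1ᶜ, u₂ ⊓ a.1ᶜ)) :
    -- top and bottom belong to `A_u`
    ((u₁, u₂) ∈ Au ∧ ((⊥ : H), (⊥ : H)) ∈ Au) ∧
    -- bounds: every element lies between bottom and top
    (∀ a ∈ Au, ((⊥ : H), (⊥ : H)) ≤ a ∧ a ≤ (u₁, u₂)) ∧
    -- closure under the operations
    (∀ a ∈ Au, ∀ b ∈ Au, a ⊔ b ∈ Au ∧ a ⊓ b ∈ Au ∧ imp a b ∈ Au) ∧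
    (∀ a ∈ Au, snot a ∈ Au) ∧
    -- `imp` is the relative pseudo-complement
    (∀ a ∈ Au, ∀ b ∈ Au, ∀ x ∈ Au, (a ⊓ x ≤ b ↔ x ≤ imp a b)) ∧
    -- `¬¬∼⊤ = ∼⊤`, where `¬x := imp x (⊥,⊥)`
    (imp (imp (snot (u₁, u₂)) (⊥, ⊥)) (⊥, ⊥) = snot (u₁, u₂)) ∧
    -- `∼x = x → ∼⊤`
    (∀ x ∈ Au, snot x = imp x (snot (u₁, u₂))) := by
  open HeytingPair in
  obtain rfl : Au = carrier u₁ u₂ := hAu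
  obtain rfl : imp = HeytingPair.imp u₁ u₂ := funext₂ himp
  obtain rfl : snot = HeytingPair.snot u₁ u₂ := funext hsnot
  exact ⟨⟨top_mem_carrier hu, bot_mem_carrier⟩,
    fun _ ha ↦ ⟨bot_le, le_top_of_mem_carrier ha⟩,
    fun _ ha _ hb ↦ ⟨sup_mem_carrier ha hb, inf_mem_carrier ha hb, imp_mem_carrier hu ha hb⟩,
    fun _ _ ↦ snot_mem_carrier hu,
    fun _ _ _ _ _ hx ↦ inf_le_iff_le_imp hx,
    imp_imp_bot_snot_top,
    fun _ hx ↦ snot_eq_imp_snot_top hx⟩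
end

section
/- In the construction A_u from a Heyting algebra H with fixed u₁ ≤ u₂: if H is a Boolean algebra, then A_u additionally satisfies x ⊔ ∼x = (u₁,u₂) (the top) for all x ∈ A_u, i.e., A_u is a c∨cpBa. -/
theorem sup_sdiff_eq_of_le_of_le {α : Type*} [GeneralizedBooleanAlgebra α] {a b u : α}
    (hab : a ≤ b) (hbu : b ≤ u) : b ⊔ u \ a = u :=
  le_antisymm (sup_le hbu sdiff_le) <|
    calc u = b ⊔ u \ b := (sup_sdiff_cancel_right hbu).symm
      _ ≤ b ⊔ u \ a := sup_le_sup_left (sdiff_le_sdiff_left hab) b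

theorem Au_cvee_of_boolean_general {H : Type*} [BooleanAlgebra H] (u₁ u₂ : H)
    (Au : Set (H × H)) (hAu : Au = {a : H × H | a.1 ≤ a.2 ∧ a.2 ≤ u₂ ∧ a.1 = a.2 ⊓ u₁})
    (snot : H × H → H × H)
    (hsnot : ∀ a : H × H, snot a = (u₁ ⊓ a.1ᶜ, u₂ ⊓ a.1ᶜ)) :
    ∀ x ∈ Au, x ⊔ snot x = (u₁, u₂) := by
  intro x hx
  rw [hAu] at hx
  obtain ⟨h12, h2u, h1⟩ := hx
  have h1u : x.1 ≤ u₁ := h1 ▸ inf_le_right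
  rw [hsnot, ← sdiff_eq, ← sdiff_eq]
  exact Prod.ext (sup_sdiff_eq_of_le_of_le le_rfl h1u) (sup_sdiff_eq_of_le_of_le h12 h2u)

/-- If `H` is a Boolean algebra, then `A_u` additionally satisfies `x ⊔ ∼x = (u₁,u₂)`,
i.e. `A_u` is a c∨cpBa. -/
theorem Au_cvee_of_boolean {H : Type*} [BooleanAlgebra H] (u₁ u₂ : H) (hu : u₁ ≤ u₂)
    (Au : Set (H × H)) (hAu : Au = {a : H × H | a.1 ≤ a.2 ∧ a.2 ≤ u₂ ∧ a.1 = a.2 ⊓ u₁})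
    (snot : H × H → H × H)
    (hsnot : ∀ a : H × H, snot a = (u₁ ⊓ a.1ᶜ, u₂ ⊓ a.1ᶜ)) :
    ∀ x ∈ Au, x ⊔ snot x = (u₁, u₂) :=
  Au_cvee_of_boolean_general u₁ u₂ Au hAu snot hsnot
end

section
/- There exists a K_im-algebra (A,1,0,∨,∧,¬,∼) such that no binary operation → on A makes (A,1,0,∨,∧,→,¬,∼) a ccpBa. (Witness: L' = (ℤ×ℤ with componentwise order) plus adjoined bottom 0̂ and top 1̂, with ¬0̂ = 1̂, ¬x = 0̂ for all other x, and ∼x = 1̂ for all x; no relative pseudo-complement of (1,0) relative to (0,1) exists.) -/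
/-!
Take `L = WithBot (WithTop (ℤ × ℤ))`. Since `⊥` is inf-irreducible in `L`, the negation sending `⊥`
to `⊤` and everything else to `⊥` is an intuitionistic negation, and the constant `⊤` is a minimal
negation. A relative pseudo-complement `(1,0) → (0,1)` would be the largest `y` with
`(1,0) ⊓ y ≤ (0,1)`. It cannot be `⊤`, since `(1,0) ≰ (0,1)`, nor `⊥`, since `(0,0)` qualifies;
but among the elements of `ℤ × ℤ` the qualifying ones are exactly those with first coordinate
`≤ 0`, which are not bounded above.
-/

section BotNeg

variable {α : Type*} [Lattice α] [BoundedOrder α] [DecidableEq α]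

def botNeg (x : α) : α := if x = ⊥ then ⊤ else ⊥

@[simp]
theorem botNeg_bot : botNeg (⊥ : α) = ⊤ := if_pos rfl

theorem botNeg_of_ne_bot {x : α} (hx : x ≠ ⊥) : botNeg x = ⊥ := if_neg hx

theorem botNeg_antitone : Antitone (botNeg : α → α) := by
  intro a b hab
  by_cases hb : b = ⊥
  · subst hb
    rw [le_bot_iff.mp hab]
  · rw [botNeg_of_ne_bot hb]
    exact bot_le

theorem botNeg_inf_le_botNeg_sup (a b : α) : botNeg a ⊓ botNeg b ≤ botNeg (a ⊔ b) := by
  by_cases ha : a = ⊥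
  · rw [ha, bot_sup_eq]
    exact inf_le_right
  · rw [botNeg_of_ne_bot ha, bot_inf_eq]
    exact bot_le

theorem le_botNeg_botNeg (a : α) : a ≤ botNeg (botNeg a) := by
  by_cases ha : a = ⊥
  · rw [ha]
    exact bot_le
  · rw [botNeg_of_ne_bot ha, botNeg_bot]
    exact le_top

theorem inf_botNeg_self_le (a b : α) : a ⊓ botNeg a ≤ b := by
  by_cases ha : a = ⊥
  · rw [ha, bot_inf_eq]
    exact bot_le
  · rw [botNeg_of_ne_bot ha, inf_bot_eq]
    exact bot_le

theorem inf_botNeg_le_botNeg_of_inf_le (hbot : InfIrred (⊥ : α)) {a b c : α} (h : a ⊓ b ≤ c) :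
    a ⊓ botNeg c ≤ botNeg b := by
  by_cases hc : c = ⊥
  · rcases hbot.2 (le_bot_iff.mp (hc ▸ h)) with ha | hb
    · rw [ha, bot_inf_eq]
      exact bot_le
    · rw [hb, botNeg_bot]
      exact le_top
  · rw [botNeg_of_ne_bot hc, inf_bot_eq]
    exact bot_le

theorem botNeg_botNeg_top [Nontrivial α] : botNeg (botNeg (⊤ : α)) = ⊤ := by
  rw [botNeg_of_ne_bot top_ne_bot, botNeg_bot]

end BotNeg

theorem WithBot.infIrred_bot {α : Type*} [SemilatticeInf α] [Nonempty α] :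
    InfIrred (⊥ : WithBot α) := by
  refine ⟨not_isMax_of_lt (WithBot.bot_lt_coe (Classical.arbitrary α)), fun b c h => ?_⟩
  induction b using WithBot.recBotCoe with
  | bot => exact Or.inl rfl
  | coe b =>
    induction c using WithBot.recBotCoe with
    | bot => exact Or.inr rfl
    | coe c => exact absurd (WithBot.coe_inf b c ▸ h) WithBot.coe_ne_bot

theorem bddAbove_setOf_inf_le_of_forall_inf_le_iff {α : Type*} [Lattice α] {a b : α}
    (hab : ¬a ≤ b) {x : WithBot (WithTop α)}
    (hx : ∀ y, ((a : WithTop α) : WithBot (WithTop α)) ⊓ y ≤ ((b : WithTop α) : WithBot _) ↔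
      y ≤ x) :
    BddAbove {y : α | a ⊓ y ≤ b} := by
  have hcoe : ∀ y : α, a ⊓ y ≤ b → ((y : WithTop α) : WithBot (WithTop α)) ≤ x := fun y hy =>
    (hx ((y : WithTop α) : WithBot (WithTop α))).mp (by
      rw [← WithBot.coe_inf, WithBot.coe_le_coe, ← WithTop.coe_inf, WithTop.coe_le_coe]
      exact hy)
  induction x using WithBot.recBotCoe with
  | bot => exact ⟨a, fun y hy => absurd (le_bot_iff.mp (hcoe y hy)) WithBot.coe_ne_bot⟩
  | coe x =>
    induction x using WithTop.recTopCoe with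
    | top =>
      have hle := (hx ⊤).mpr le_top
      rw [inf_top_eq, WithBot.coe_le_coe, WithTop.coe_le_coe] at hle
      exact absurd hle hab
    | coe m => exact ⟨m, fun y hy => by exact_mod_cast hcoe y hy⟩

theorem not_bddAbove_setOf_inf_le_int_prod : ¬BddAbove {y : ℤ × ℤ | (1, 0) ⊓ y ≤ (0, 1)} := by
  rintro ⟨⟨p, q⟩, hbound⟩
  have hmem : ((0 : ℤ), q + 1) ∈ {y : ℤ × ℤ | (1, 0) ⊓ y ≤ (0, 1)} := by
    simp [Prod.le_def]
  have hle : q + 1 ≤ q := (hbound hmem).2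
  omega

/-- There exists a `K_im`-algebra `(A,1,0,∨,∧,¬,∼)` such that no binary operation `→` on `A`
makes `(A,1,0,∨,∧,→,¬,∼)` a ccpBa. -/
theorem exists_Kim_algebra_not_extendable_to_ccpBa :
    ∃ (A : Type) (_ : DistribLattice A) (_ : BoundedOrder A) (neg snot : A → A),
      -- `neg` is an intuitionistic negation
      (∀ a b : A, a ≤ b → neg b ≤ neg a) ∧
      (∀ a b : A, neg a ⊓ neg b ≤ neg (a ⊔ b)) ∧
      (neg (⊥ : A) = ⊤) ∧
      (∀ a : A, a ≤ neg (neg a)) ∧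
      (∀ a b c : A, a ⊓ b ≤ c → a ⊓ neg c ≤ neg b) ∧
      (∀ a b : A, a ⊓ neg a ≤ b) ∧
      -- `snot` is a minimal negation
      (∀ a b : A, a ≤ b → snot b ≤ snot a) ∧
      (∀ a b : A, snot a ⊓ snot b ≤ snot (a ⊔ b)) ∧
      (snot (⊥ : A) = ⊤) ∧
      (∀ a : A, a ≤ snot (snot a)) ∧
      (∀ a b c : A, a ⊓ b ≤ c → a ⊓ snot c ≤ snot b) ∧
      -- `¬¬∼1 = ∼1`
      (neg (neg (snot (⊤ : A))) = snot (⊤ : A)) ∧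
      -- no implication turns it into a ccpBa
      ¬ ∃ imp : A → A → A,
          (∀ a b x : A, a ⊓ x ≤ b ↔ x ≤ imp a b) ∧
          (∀ a : A, neg a = imp a ⊥) ∧
          (∀ a : A, snot a = imp a (snot ⊤)) := by
  refine ⟨WithBot (WithTop (ℤ × ℤ)), inferInstance, inferInstance, botNeg, fun _ => ⊤,
    botNeg_antitone, botNeg_inf_le_botNeg_sup, botNeg_bot, le_botNeg_botNeg,
    fun _ _ _ => inf_botNeg_le_botNeg_of_inf_le WithBot.infIrred_bot, inf_botNeg_self_le,
    fun _ _ _ => le_rfl, fun _ _ => inf_le_left, rfl, fun _ => le_top, fun _ _ _ _ => le_top,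
    botNeg_botNeg_top, ?_⟩
  rintro ⟨imp, himp, -, -⟩
  have hab : ¬((1, 0) : ℤ × ℤ) ≤ (0, 1) := by simp [Prod.le_def]
  exact not_bddAbove_setOf_inf_le_int_prod
    (bddAbove_setOf_inf_le_of_forall_inf_le_iff hab (himp _ _))
end

section
/- Let (W,≤,Y₀) be a sub-normal frame with R₂ defined by x R₂ y ⟺ ∃z (x ≤ z ∧ y ≤ z ∧ z ∉ Y₀). If additionally ≤ restricted to W∖Y₀ is symmetric (condition (E): x,y ∉ Y₀ and x ≤ y imply y ≤ x), then R₂ ⊆ ≤⁻¹, i.e., x R₂ y implies y ≤ x. -/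
theorem subnormal_identity_R2_subset_general {W : Type*} [PartialOrder W] (Y₀ : Set W)
    (hup : ∀ x y : W, x ∈ Y₀ → x ≤ y → y ∈ Y₀)
    (hE : ∀ x y : W, x ∉ Y₀ → y ∉ Y₀ → x ≤ y → y ≤ x)
    (R₂ : W → W → Prop)
    (hR₂ : ∀ x y : W, R₂ x y ↔ ∃ z : W, x ≤ z ∧ y ≤ z ∧ z ∉ Y₀) :
    ∀ x y : W, R₂ x y → y ≤ x := by
  intro x y h
  obtain ⟨z, hxz, hyz, hz⟩ := (hR₂ x y).mp h
  have hx : x ∉ Y₀ := fun hx => hz (hup x z hx hxz)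
  exact hyz.trans (hE x z hx hz hxz)

/-- In a sub-normal identity frame (condition (E)), the relation `R₂` satisfies `R₂ ⊆ ≤⁻¹`. -/
theorem subnormal_identity_R2_subset {W : Type*} [PartialOrder W] (Y₀ : Set W)
    (hup : ∀ x y : W, x ∈ Y₀ → x ≤ y → y ∈ Y₀)
    (hD : ∀ x : W, (∀ y : W, x ≤ y → ∃ z : W, y ≤ z ∧ z ∈ Y₀) → x ∈ Y₀)
    (hE : ∀ x y : W, x ∉ Y₀ → y ∉ Y₀ → x ≤ y → y ≤ x)
    (R₂ : W → W → Prop)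
    (hR₂ : ∀ x y : W, R₂ x y ↔ ∃ z : W, x ≤ z ∧ y ≤ z ∧ z ∉ Y₀) :
    ∀ x y : W, R₂ x y → y ≤ x :=
  subnormal_identity_R2_subset_general Y₀ hup hE R₂ hR₂
end

section
/- Let (W,≤,Y₀) be a sub-normal frame. Let Up(W) be the set of upsets of W, with U → V := {w : ∀v ≥ w, v ∈ U → v ∈ V}, ¬U := U → ∅, ∼U := U → Y₀. Then (Up(W), W, ∅, ∩, ∪, →, ¬, ∼) is a ccpBa: → is the relative pseudo-complement on the lattice of upsets, ¬¬∼W = ∼W (= Y₀ up to the closure given by (D)), and ∼U = U → ∼W for all upsets U. -/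
/-!
Since `Y₀` is an upset, `∼W = W → Y₀` is `Y₀` itself, which gives the last identity at once.
For an upset `Y`, a point lies in `¬¬Y` exactly when every point above it has a point in `Y`
above it; condition (D) says precisely that such points already lie in `Y`.
-/

section

variable {α : Type*}

def upsetImp [LE α] (U V : Set α) : Set α :=
  {w | ∀ v, w ≤ v → v ∈ U → v ∈ V}

variable [Preorder α] {U V X Y : Set α}

theorem isUpperSet_upsetImp (U V : Set α) : IsUpperSet (upsetImp U V) :=
  fun _ _ hxy hx v hyv hv => hx v (hxy.trans hyv) hv

theorem inter_subset_iff_subset_upsetImp (hX : IsUpperSet X) :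
    U ∩ X ⊆ V ↔ X ⊆ upsetImp U V :=
  ⟨fun h _ hx _ hxv hv => h ⟨hv, hX hxv hx⟩, fun h x ⟨hxU, hxX⟩ => h hxX x le_rfl hxU⟩

theorem upsetImp_univ (hY : IsUpperSet Y) : upsetImp Set.univ Y = Y :=
  Set.ext fun w => ⟨fun h => h w le_rfl trivial, fun hw _ hwv _ => hY hwv hw⟩

theorem mem_upsetImp_empty_upsetImp_empty {w : α} :
    w ∈ upsetImp (upsetImp Y ∅) ∅ ↔ ∀ v, w ≤ v → ∃ u, v ≤ u ∧ u ∈ Y := by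
  simp only [upsetImp, Set.mem_ofPred_eq, Set.mem_empty_iff_false, imp_false, not_forall,
    exists_prop, not_not]

theorem upsetImp_empty_upsetImp_empty (hY : IsUpperSet Y)
    (hD : ∀ x, (∀ y, x ≤ y → ∃ z, y ≤ z ∧ z ∈ Y) → x ∈ Y) :
    upsetImp (upsetImp Y ∅) ∅ = Y :=
  Set.ext fun w => mem_upsetImp_empty_upsetImp_empty.trans
    ⟨hD w, fun hw v hwv => ⟨v, le_rfl, hY hwv hw⟩⟩

end

/-- The complex algebra of upsets of a sub-normal frame `(W,≤,Y₀)` forms a ccpBa: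
`→` is the relative pseudo-complement on the lattice of upsets, `¬¬∼W = ∼W`
(with `¬U := U → ∅`, `∼U := U → Y₀`), and `∼U = U → ∼W` for all upsets `U`. -/
theorem subnormal_complex_algebra_ccpBa {W : Type*} [PartialOrder W] (Y₀ : Set W)
    (hup : ∀ x y : W, x ∈ Y₀ → x ≤ y → y ∈ Y₀)
    (hD : ∀ x : W, (∀ y : W, x ≤ y → ∃ z : W, y ≤ z ∧ z ∈ Y₀) → x ∈ Y₀)
    (IsUpset : Set W → Prop) (hIsUpset : ∀ U : Set W, IsUpset U ↔ ∀ x y : W, x ∈ U → x ≤ y → y ∈ U)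
    (imp : Set W → Set W → Set W)
    (himp : ∀ U V : Set W, imp U V = {w : W | ∀ v : W, w ≤ v → v ∈ U → v ∈ V}) :
    -- closure: implication of upsets is an upset
    (∀ U V : Set W, IsUpset U → IsUpset V → IsUpset (imp U V)) ∧
    -- `imp` is the relative pseudo-complement in the lattice of upsets
    (∀ U V X : Set W, IsUpset U → IsUpset V → IsUpset X → (U ∩ X ⊆ V ↔ X ⊆ imp U V)) ∧
    -- `¬¬∼W = ∼W`, where `∼W = W → Y₀` and `¬U = U → ∅`
    (imp (imp (imp Set.univ Y₀) ∅) ∅ = imp Set.univ Y₀) ∧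
    -- `∼U = U → ∼W`
    (∀ U : Set W, IsUpset U → imp U Y₀ = imp U (imp Set.univ Y₀)) := by
  obtain rfl : imp = upsetImp := funext₂ himp
  obtain rfl : IsUpset = IsUpperSet := funext fun U => propext <| (hIsUpset U).trans
    ⟨fun h _ _ hab ha => h _ _ ha hab, fun h _ _ ha hab => h hab ha⟩
  have hY₀ : IsUpperSet Y₀ := fun _ _ hab ha => hup _ _ ha hab
  rw [upsetImp_univ hY₀]
  exact ⟨fun U V _ _ => isUpperSet_upsetImp U V,
    fun _ _ _ _ _ hX => inter_subset_iff_subset_upsetImp hX,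
    upsetImp_empty_upsetImp_empty hY₀ hD,
    fun _ _ => rfl⟩
end
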